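/- For every element g = [A, σ_i] of PΓL(2, q^n), there exist a divisor t of n and a matrix C ∈ GL(2, q^n) such that g and h = [C, σ_t] generate the same cyclic subgroup of PΓL(2, q^n); consequently a monic irreducible polynomial f over F_{q^n} of degree ≥ 2 is fixed by g if and only if it is fixed by h. -/

import Mathlib

open Polynomial

/-- The Möbius substitution `A ∘ f (x) = (cx+d)^(deg f) f((ax+b)/(cx+d))` as a polynomial. -/
noncomputable def mobius {F : Type*} [Field F] (A : Matrix (Fin 2) (Fin 2) F) (f : F[X]) : F[X] :=
  ∑ i ∈ Finset.range (f.natDegree + 1),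
    C (f.coeff i) * (C (A 0 0) * X + C (A 0 1)) ^ i *
      (C (A 1 0) * X + C (A 1 1)) ^ (f.natDegree - i)

/-- The monic normalization `[A] ∘ f`. -/
noncomputable def mobiusN {F : Type*} [Field F] (A : Matrix (Fin 2) (Fin 2) F) (f : F[X]) : F[X] :=
  mobius A f * C (mobius A f).leadingCoeff⁻¹

/-- The `i`-th iterate of the `q`-Frobenius (`q = p^e`), i.e. `x ↦ x^(q^i)`. -/
noncomputable def frob (K : Type*) [Field K] (p e : ℕ) [Fact p.Prime] [CharP K p] (i : ℕ) :
    K →+* K :=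
  iterateFrobenius K p (e * i)

/-- The Möbius–Frobenius action `[A, σᵢ] * f = [A] ∘ σᵢ(f)`. -/
noncomputable def pact (K : Type*) [Field K] (p e : ℕ) [Fact p.Prime] [CharP K p]
    (A : Matrix (Fin 2) (Fin 2) K) (i : ℕ) (f : K[X]) : K[X] :=
  mobiusN A (f.map (frob K p e i))

/-- The twisted product `A · σᵢ(A) · σ₂ᵢ(A) ⋯ σ_{i(k-1)}(A)`. -/
noncomputable def conjProd (K : Type*) [Field K] (p e : ℕ) [Fact p.Prime] [CharP K p]
    (A : Matrix (Fin 2) (Fin 2) K) (i k : ℕ) : Matrix (Fin 2) (Fin 2) K :=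
  ((List.range k).map fun j => A.map (frob K p e (i * j))).prod

/-- `F_{B,m}(x) = b x^(q^m+1) - a x^(q^m) + d x - c` for `B = [[a,b],[c,d]]`. -/
noncomputable def FPoly (K : Type*) [Field K] (p e : ℕ)
    (B : Matrix (Fin 2) (Fin 2) K) (m : ℕ) : K[X] :=
  C (B 0 1) * X ^ (p ^ (e * m) + 1) - C (B 0 0) * X ^ (p ^ (e * m)) + C (B 1 1) * X - C (B 1 0)

/-- `F_{A,m,i}(x) = σ_{n-i}(F_{A_i^*, m-i}(x))` where `A_i^* = A σ₁(A) ⋯ σ_{i-1}(A)`. -/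
noncomputable def FA (K : Type*) [Field K] (p e n : ℕ) [Fact p.Prime] [CharP K p]
    (A : Matrix (Fin 2) (Fin 2) K) (m i : ℕ) : K[X] :=
  (FPoly K p e (conjProd K p e A 1 i) (m - i)).map (frob K p e (n - i))

open Function

/-!
Iterating `g = [A, σᵢ]` gives `g^k = [Aₖ, σ_{ki}]` with `Aₖ₊₁ = σᵢ(Aₖ) A`. Since `σ_{ni} = id`,
`g^n` is the pure Möbius map `[Aₙ, id]`, so every orbit of `g` has period dividing
`N = n · ord(Aₙ)`. Lifting the inverse of `i / gcd(i, n)` modulo `n / gcd(i, n)` to a unit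
modulo `N` gives `k` coprime to `N` with `k i ≡ gcd(i, n) (mod n)`; then `h = g^k` has
Frobenius part `σ_{gcd(i,n)}`, and since `k` is invertible modulo `N`, `g` and `g^k` have the
same fixed points.

All of this only needs `f` to have no root in the field: then the binary form `c^m f(a/c)` does
not vanish on nonzero vectors, so Möbius substitution preserves the degree of `f` and the action
composes like the semidirect product.
-/

section HomSubst

variable {R : Type*} [CommRing R]

noncomputable def homSubst (m : ℕ) (f P Q : R[X]) : R[X] :=
  ∑ i ∈ Finset.range (m + 1), C (f.coeff i) * P ^ i * Q ^ (m - i)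

def binaryForm (m : ℕ) (f : R[X]) (a c : R) : R :=
  ∑ i ∈ Finset.range (m + 1), f.coeff i * a ^ i * c ^ (m - i)

lemma map_homSubst {L : Type*} [Field L] (φ : R[X] →+* L) {m : ℕ} {f : R[X]}
    (hm : f.natDegree ≤ m) (P : R[X]) {Q : R[X]} (hQ : φ Q ≠ 0) :
    φ (homSubst m f P Q) = φ Q ^ m * eval₂ (φ.comp C) (φ P / φ Q) f := by
  rw [homSubst, map_sum, eval₂_eq_sum_range' _ (Nat.lt_succ_of_le hm), Finset.mul_sum]
  refine Finset.sum_congr rfl fun j hj => ?_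
  have hjm : j ≤ m := Nat.lt_succ_iff.mp (Finset.mem_range.mp hj)
  rw [← Nat.sub_add_cancel hjm, pow_add]
  simp only [map_mul, map_pow, RingHom.comp_apply, Nat.add_sub_cancel, div_pow]
  field_simp

lemma eval_homSubst (m : ℕ) (f P Q : R[X]) (x : R) :
    (homSubst m f P Q).eval x = binaryForm m f (P.eval x) (Q.eval x) := by
  simp [homSubst, binaryForm, eval_finsetSum]

lemma natDegree_homSubst_le {m : ℕ} (f : R[X]) {P Q : R[X]} (hP : P.natDegree ≤ 1)
    (hQ : Q.natDegree ≤ 1) : (homSubst m f P Q).natDegree ≤ m := by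
  refine natDegree_sum_le_of_forall_le _ _ fun i hi => ?_
  have him : i ≤ m := Nat.lt_succ_iff.mp (Finset.mem_range.mp hi)
  calc (C (f.coeff i) * P ^ i * Q ^ (m - i)).natDegree
      ≤ (C (f.coeff i)).natDegree + (P ^ i).natDegree + (Q ^ (m - i)).natDegree :=
        natDegree_mul_le.trans (Nat.add_le_add_right natDegree_mul_le _)
    _ ≤ 0 + i * 1 + (m - i) * 1 := by
        gcongr
        · simp
        · exact natDegree_pow_le_of_le i hP
        · exact natDegree_pow_le_of_le _ hQ
    _ = m := by omega

lemma coeff_linear_pow (a b : R) (i : ℕ) : ((C a * X + C b) ^ i).coeff i = a ^ i := by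
  simpa using coeff_pow_of_natDegree_le (m := i) (natDegree_linear_le (a := a) (b := b))

lemma coeff_homSubst_linear (m : ℕ) (f : R[X]) (a b c d : R) :
    (homSubst m f (C a * X + C b) (C c * X + C d)).coeff m = binaryForm m f a c := by
  rw [homSubst, finsetSum_coeff]
  refine Finset.sum_congr rfl fun i hi => ?_
  obtain ⟨l, rfl⟩ := Nat.exists_eq_add_of_le (Nat.lt_succ_iff.mp (Finset.mem_range.mp hi))
  have hP : (C (f.coeff i) * (C a * X + C b) ^ i).natDegree ≤ i := by
    simpa using (natDegree_C_mul_le (f.coeff i) _).trans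
      (natDegree_pow_le_of_le i natDegree_linear_le)
  have hQ : ((C c * X + C d) ^ l).natDegree ≤ l :=
    (natDegree_pow_le_of_le l natDegree_linear_le).trans_eq (mul_one l)
  rw [Nat.add_sub_cancel_left, coeff_mul_add_eq_of_natDegree_le hP hQ, coeff_C_mul,
    coeff_linear_pow, coeff_linear_pow]

section Domain

variable [IsDomain R]

lemma homSubst_homSubst {m : ℕ} {f : R[X]} (hm : f.natDegree ≤ m) (a b c d : R) (P : R[X])
    {Q : R[X]} (hQ : Q ≠ 0) :
    homSubst m (homSubst m f (C a * X + C b) (C c * X + C d)) P Q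
      = homSubst m f (C a * P + C b * Q) (C c * P + C d * Q) := by
  obtain ⟨ι, hι⟩ : ∃ ι : R[X] →+* RatFunc R, Injective ι :=
    ⟨algebraMap R[X] (RatFunc R), IsFractionRing.injective R[X] (RatFunc R)⟩
  have hιQ : ι Q ≠ 0 := (map_ne_zero_iff ι hι).mpr hQ
  apply hι
  rw [map_homSubst ι (natDegree_homSubst_le f natDegree_linear_le natDegree_linear_le) P hιQ,
    homSubst, homSubst, map_sum, eval₂_finsetSum, Finset.mul_sum]
  refine Finset.sum_congr rfl fun j hj => ?_
  obtain ⟨l, rfl⟩ := Nat.exists_eq_add_of_le (Nat.lt_succ_iff.mp (Finset.mem_range.mp hj))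
  simp only [eval₂_mul, eval₂_pow, eval₂_add, eval₂_C, eval₂_X, map_mul, map_pow, map_add,
    RingHom.comp_apply, Nat.add_sub_cancel_left, pow_add]
  obtain ⟨z, hz⟩ : ∃ z, ι P = ι Q * z := ⟨ι P / ι Q, by field_simp⟩
  have hlin (u v : RatFunc R) : u * (ι Q * z) + v * ι Q = ι Q * (u * z + v) := by ring
  rw [hz, mul_div_cancel_left₀ _ hιQ, hlin, hlin, mul_pow, mul_pow]
  ring

end Domain

end HomSubst

section Mobius

variable {K : Type*} [Field K] {A B : Matrix (Fin 2) (Fin 2) K} {f : K[X]}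

lemma binaryForm_ne_zero (hf : ∀ x, f.eval x ≠ 0) {a c : K} (hac : a ≠ 0 ∨ c ≠ 0) :
    binaryForm f.natDegree f a c ≠ 0 := by
  rcases eq_or_ne c 0 with rfl | hc
  · have hf0 : f ≠ 0 := fun h => hf 0 (by simp [h])
    rw [binaryForm, Finset.sum_eq_single f.natDegree]
    · simp [hf0, hac.resolve_right (not_not.mpr rfl)]
    · intro i hi hne
      have : f.natDegree - i ≠ 0 := by have := Finset.mem_range.mp hi; omega
      simp [zero_pow this]
    · simp
  · have hC : (evalRingHom (0 : K)).comp C = RingHom.id K := RingHom.ext fun _ => eval_C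
    have key := map_homSubst (evalRingHom 0) (le_refl f.natDegree) (C a) (Q := C c)
      (by simpa using hc)
    simp only [coe_evalRingHom, eval_homSubst, eval_C, hC, eval₂_id] at key
    rw [key]
    exact mul_ne_zero (pow_ne_zero _ hc) (hf _)

lemma Matrix.fin_two_col_ne_zero (hA : A.det ≠ 0) : A 0 0 ≠ 0 ∨ A 1 0 ≠ 0 := by
  by_contra! h
  exact hA (by simp [Matrix.det_fin_two, h.1, h.2])

lemma C_mul_X_add_C_ne_zero_of_det_ne_zero (hA : A.det ≠ 0) :
    C (A 1 0) * X + C (A 1 1) ≠ 0 := by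
  intro h
  have h1 : A 1 0 = 0 := by simpa using congrArg (coeff · 1) h
  have h0 : A 1 1 = 0 := by simpa using congrArg (coeff · 0) h
  exact hA (by simp [Matrix.det_fin_two, h0, h1])

lemma mobius_eq_homSubst (A : Matrix (Fin 2) (Fin 2) K) (f : K[X]) :
    mobius A f =
      homSubst f.natDegree f (C (A 0 0) * X + C (A 0 1)) (C (A 1 0) * X + C (A 1 1)) :=
  rfl

lemma natDegree_mobius_le (A : Matrix (Fin 2) (Fin 2) K) (f : K[X]) :
    (mobius A f).natDegree ≤ f.natDegree :=
  natDegree_homSubst_le f natDegree_linear_le natDegree_linear_le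

lemma coeff_natDegree_mobius_ne_zero (hA : A.det ≠ 0) (hf : ∀ x, f.eval x ≠ 0) :
    (mobius A f).coeff f.natDegree ≠ 0 := by
  rw [mobius_eq_homSubst, coeff_homSubst_linear]
  exact binaryForm_ne_zero hf (Matrix.fin_two_col_ne_zero hA)

lemma natDegree_mobius (hA : A.det ≠ 0) (hf : ∀ x, f.eval x ≠ 0) :
    (mobius A f).natDegree = f.natDegree :=
  le_antisymm (natDegree_mobius_le A f)
    (le_natDegree_of_ne_zero (coeff_natDegree_mobius_ne_zero hA hf))

lemma leadingCoeff_mobius_ne_zero (hA : A.det ≠ 0) (hf : ∀ x, f.eval x ≠ 0) :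
    (mobius A f).leadingCoeff ≠ 0 := by
  rw [leadingCoeff, natDegree_mobius hA hf]
  exact coeff_natDegree_mobius_ne_zero hA hf

lemma mobius_mobius (hA : A.det ≠ 0) (hB : B.det ≠ 0) (hf : ∀ x, f.eval x ≠ 0) :
    mobius B (mobius A f) = mobius (A * B) f := by
  rw [mobius_eq_homSubst B, natDegree_mobius hA hf, mobius_eq_homSubst A,
    homSubst_homSubst le_rfl _ _ _ _ _ (C_mul_X_add_C_ne_zero_of_det_ne_zero hB),
    mobius_eq_homSubst]
  congr 1 <;> simp only [Matrix.mul_apply, Fin.sum_univ_two, C_add, C_mul] <;> ring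

lemma mobius_mul_C (A : Matrix (Fin 2) (Fin 2) K) (g : K[X]) {c : K} (hc : c ≠ 0) :
    mobius A (g * C c) = mobius A g * C c := by
  simp only [mobius_eq_homSubst, natDegree_mul_C hc, homSubst, coeff_mul_C, C_mul, Finset.sum_mul]
  exact Finset.sum_congr rfl fun _ _ => by ring

lemma mobiusN_mul_C (A : Matrix (Fin 2) (Fin 2) K) (g : K[X]) {c : K} (hc : c ≠ 0) :
    mobiusN A (g * C c) = mobiusN A g := by
  rw [mobiusN, mobiusN, mobius_mul_C A g hc, leadingCoeff_mul, leadingCoeff_C, mul_assoc, ← C_mul,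
    mul_inv_rev, ← mul_assoc c, mul_inv_cancel₀ hc, one_mul]

lemma mobiusN_mobiusN (hA : A.det ≠ 0) (hB : B.det ≠ 0) (hf : ∀ x, f.eval x ≠ 0) :
    mobiusN B (mobiusN A f) = mobiusN (A * B) f := by
  calc mobiusN B (mobiusN A f) = mobiusN B (mobius A f) :=
        mobiusN_mul_C B _ (inv_ne_zero (leadingCoeff_mobius_ne_zero hA hf))
    _ = mobiusN (A * B) f := by rw [mobiusN, mobiusN, mobius_mobius hA hB hf]

lemma mobiusN_one (hf : f.Monic) : mobiusN (1 : Matrix (Fin 2) (Fin 2) K) f = f := by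
  have : mobius (1 : Matrix (Fin 2) (Fin 2) K) f = f := by
    simp only [mobius_eq_homSubst, homSubst, Matrix.one_apply_eq, map_one, one_mul, ne_eq,
      zero_ne_one, one_ne_zero, not_false_eq_true, Matrix.one_apply_ne, map_zero, add_zero,
      C_mul_X_pow_eq_monomial, zero_mul, zero_add, one_pow, mul_one]
    exact (as_sum_range' f _ (Nat.lt_succ_self _)).symm
  rw [mobiusN, this, hf.leadingCoeff, inv_one, C_1, mul_one]

lemma map_mobiusN {L : Type*} [Field L] (σ : K →+* L) (A : Matrix (Fin 2) (Fin 2) K) (f : K[X]) :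
    (mobiusN A f).map σ = mobiusN (A.map σ) (f.map σ) := by
  have : (mobius A f).map σ = mobius (A.map σ) (f.map σ) := by
    simp [mobius_eq_homSubst, homSubst, Polynomial.map_sum]
  rw [mobiusN, mobiusN, Polynomial.map_mul, map_C, map_inv₀, ← leadingCoeff_map, this]

end Mobius

section Frobenius

variable {K : Type*} [Field K] (p e : ℕ) [Fact p.Prime] [CharP K p]

lemma frob_zero : frob K p e 0 = RingHom.id K := by
  rw [frob, mul_zero, iterateFrobenius_zero]

lemma frob_add (a b : ℕ) : frob K p e (a + b) = (frob K p e a).comp (frob K p e b) := by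
  rw [frob, frob, frob, mul_add, iterateFrobenius_add]

lemma frob_surjective [PerfectRing K p] (i : ℕ) : Surjective (frob K p e i) :=
  (bijective_iterateFrobenius K p _).2

lemma frob_mul_eq_id [Fintype K] {n : ℕ} (hK : Fintype.card K = p ^ (e * n)) (j : ℕ) :
    frob K p e (n * j) = RingHom.id K := by
  ext x
  rw [frob, iterateFrobenius_def, ← mul_assoc, pow_mul, ← hK, FiniteField.pow_card_pow]
  rfl

lemma frob_congr [Fintype K] {n : ℕ} (hK : Fintype.card K = p ^ (e * n)) {a b : ℕ}
    (h : a ≡ b [MOD n]) : frob K p e a = frob K p e b := by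
  rw [← Nat.mod_add_div a n, ← Nat.mod_add_div b n, frob_add, frob_add, frob_mul_eq_id p e hK,
    frob_mul_eq_id p e hK, show a % n = b % n from h]

end Frobenius

lemma eval_map_ne_zero_of_surjective {K L : Type*} [Field K] [Field L] {σ : K →+* L}
    (hσ : Surjective σ) {f : K[X]} (hf : ∀ x, f.eval x ≠ 0) (y : L) : (f.map σ).eval y ≠ 0 := by
  obtain ⟨x, rfl⟩ := hσ y
  rw [eval_map, eval₂_hom]
  exact (_root_.map_ne_zero σ).mpr (hf x)

section Action

variable {K : Type*} [Field K] (p e : ℕ) [Fact p.Prime] [CharP K p]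
  {A B : Matrix (Fin 2) (Fin 2) K} {f : K[X]}

lemma det_map_frob_ne_zero (hA : A.det ≠ 0) (j : ℕ) : (A.map (frob K p e j)).det ≠ 0 := by
  rw [← RingHom.mapMatrix_apply, ← RingHom.map_det]
  exact (_root_.map_ne_zero _).mpr hA

lemma pact_one_zero (hm : f.Monic) : pact K p e 1 0 f = f := by
  rw [pact, frob_zero, Polynomial.map_id, mobiusN_one hm]

variable [PerfectRing K p]

lemma pact_pact (hA : A.det ≠ 0) (hB : B.det ≠ 0) (hf : ∀ x, f.eval x ≠ 0) (a b : ℕ) :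
    pact K p e B b (pact K p e A a f) = pact K p e (A.map (frob K p e b) * B) (a + b) f := by
  rw [pact, pact, pact, map_mobiusN, Polynomial.map_map, ← frob_add, add_comm b a,
    mobiusN_mobiusN (det_map_frob_ne_zero p e hA b) hB
      (eval_map_ne_zero_of_surjective (frob_surjective p e _) hf)]

end Action

lemma pact_congr {K : Type*} [Field K] [Fintype K] (p e : ℕ) [Fact p.Prime] [CharP K p] {n : ℕ}
    (hK : Fintype.card K = p ^ (e * n)) (A : Matrix (Fin 2) (Fin 2) K) {a b : ℕ}
    (h : a ≡ b [MOD n]) : pact K p e A a = pact K p e A b := by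
  funext f
  rw [pact, pact, frob_congr p e hK h]

section TwistedPow

variable {K : Type*} [Field K] (p e : ℕ) [Fact p.Prime] [CharP K p]
  {A : Matrix (Fin 2) (Fin 2) K}

noncomputable def twistedPow (A : Matrix (Fin 2) (Fin 2) K) (i : ℕ) :
    ℕ → Matrix (Fin 2) (Fin 2) K
  | 0 => 1
  | k + 1 => (twistedPow A i k).map (frob K p e i) * A

lemma det_twistedPow_ne_zero (hA : A.det ≠ 0) (i : ℕ) : ∀ k, (twistedPow p e A i k).det ≠ 0
  | 0 => by simp [twistedPow]
  | k + 1 => by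
    rw [twistedPow, Matrix.det_mul]
    exact mul_ne_zero (det_map_frob_ne_zero p e (det_twistedPow_ne_zero hA i k) i) hA

lemma twistedPow_add (A : Matrix (Fin 2) (Fin 2) K) (i a : ℕ) : ∀ b,
    twistedPow p e A i (a + b) =
      (twistedPow p e A i a).map (frob K p e (b * i)) * twistedPow p e A i b
  | 0 => by simp [twistedPow, frob_zero]
  | b + 1 => by
    rw [← add_assoc, twistedPow, twistedPow_add A i a b, Matrix.map_mul, Matrix.map_map, twistedPow,
      ← mul_assoc, ← RingHom.coe_comp, ← frob_add, Nat.succ_mul, add_comm i]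

lemma twistedPow_mul_eq_pow (A : Matrix (Fin 2) (Fin 2) K) {i a : ℕ}
    (h : frob K p e (a * i) = RingHom.id K) :
    ∀ j, twistedPow p e A i (a * j) = twistedPow p e A i a ^ j
  | 0 => rfl
  | j + 1 => by
    rw [Nat.mul_succ, twistedPow_add, h, twistedPow_mul_eq_pow A h j, pow_succ]
    simp

lemma iterate_pact [PerfectRing K p] (hA : A.det ≠ 0) {f : K[X]} (hm : f.Monic)
    (hf : ∀ x, f.eval x ≠ 0) (i : ℕ) :
    ∀ k, (pact K p e A i)^[k] f = pact K p e (twistedPow p e A i k) (k * i) f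
  | 0 => by rw [iterate_zero_apply, zero_mul, twistedPow, pact_one_zero p e hm]
  | k + 1 => by
    rw [iterate_succ_apply', iterate_pact hA hm hf i k,
      pact_pact p e (det_twistedPow_ne_zero p e hA i k) hA hf, twistedPow, Nat.succ_mul]

end TwistedPow

lemma Nat.exists_coprime_mul_modEq_gcd (i : ℕ) {n N : ℕ} (hN : N ≠ 0) (hnN : n ∣ N) :
    ∃ k, k.Coprime N ∧ k * i ≡ i.gcd n [MOD n] := by
  obtain ⟨i', n', hcop, hi, hn⟩ := Nat.exists_coprime i n
  set g := i.gcd n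
  have : NeZero N := ⟨hN⟩
  obtain ⟨w, hw⟩ := ZMod.unitsMap_surjective ((Dvd.intro g hn.symm).trans hnN)
    (ZMod.unitOfCoprime i' hcop)⁻¹
  refine ⟨(w : ZMod N).val, ZMod.val_coe_unit_coprime w, ?_⟩
  have hk : ((w : ZMod N).val : ZMod n') = ((ZMod.unitOfCoprime i' hcop)⁻¹ : (ZMod n')ˣ) := by
    rw [← hw, ZMod.natCast_val]
    rfl
  have hinv : (w : ZMod N).val * i' ≡ 1 [MOD n'] := by
    rw [← ZMod.natCast_eq_natCast_iff, Nat.cast_mul, hk, Nat.cast_one,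
      ← ZMod.coe_unitOfCoprime i' hcop, Units.inv_mul]
  rw [hi, hn, ← mul_assoc, mul_comm n']
  simpa [mul_comm g, mul_assoc] using hinv.mul_right' g

lemma Function.IsPeriodicPt.isFixedPt_iterate_iff {α : Type*} {T : α → α} {x : α} {N k : ℕ}
    (hN : IsPeriodicPt T N x) (hk : k.Coprime N) : IsFixedPt T^[k] x ↔ IsFixedPt T x := by
  refine ⟨fun h => ?_, fun h => h.iterate k⟩
  have hkx : IsPeriodicPt T k x := h
  simpa [IsPeriodicPt, hk.gcd_eq_one] using hkx.gcd hN

theorem stmt5_general (p e n : ℕ) [Fact p.Prime] (hn : 0 < n)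
    (K : Type*) [Field K] [Fintype K] [CharP K p] (hK : Fintype.card K = p ^ (e * n))
    (A : Matrix (Fin 2) (Fin 2) K) (hA : A.det ≠ 0) (i : ℕ) :
    ∃ (t : ℕ) (C : Matrix (Fin 2) (Fin 2) K), t ∣ n ∧ C.det ≠ 0 ∧
      ∀ f : K[X], f.Monic → Irreducible f → 2 ≤ f.natDegree →
        (pact K p e A i f = f ↔ pact K p e C t f = f) := by
  obtain ⟨r, hr, hDr⟩ := ((Matrix.isUnit_iff_isUnit_det _).mpr
    (det_twistedPow_ne_zero p e hA i n).isUnit).isOfFinOrder.exists_pow_eq_one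
  obtain ⟨k, hkN, hki⟩ := Nat.exists_coprime_mul_modEq_gcd i (Nat.mul_ne_zero hn.ne' hr.ne')
    (dvd_mul_right n r)
  refine ⟨i.gcd n, twistedPow p e A i k, Nat.gcd_dvd_right i n, det_twistedPow_ne_zero p e hA i k,
    fun f hm hirr hdeg => ?_⟩
  have hf (x : K) : f.eval x ≠ 0 := hirr.not_isRoot_of_natDegree_ne_one (by omega)
  have hper : IsPeriodicPt (pact K p e A i) (n * r) f := by
    rw [IsPeriodicPt, IsFixedPt, iterate_pact p e hA hm hf,
      twistedPow_mul_eq_pow p e A (frob_mul_eq_id p e hK i), hDr,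
      pact_congr p e hK 1 (Nat.modEq_zero_iff_dvd.mpr (dvd_mul_of_dvd_left (dvd_mul_right n r) i)),
      pact_one_zero p e hm]
  rw [← pact_congr p e hK _ hki, ← iterate_pact p e hA hm hf]
  exact (hper.isFixedPt_iterate_iff hkN).symm

theorem stmt5 (p e n : ℕ) [Fact p.Prime] (he : 0 < e) (hn : 0 < n)
    (K : Type*) [Field K] [Fintype K] [CharP K p] (hK : Fintype.card K = p ^ (e * n))
    (A : Matrix (Fin 2) (Fin 2) K) (hA : A.det ≠ 0) (i : ℕ) :
    ∃ (t : ℕ) (C : Matrix (Fin 2) (Fin 2) K), t ∣ n ∧ C.det ≠ 0 ∧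
      ∀ f : K[X], f.Monic → Irreducible f → 2 ≤ f.natDegree →
        (pact K p e A i f = f ↔ pact K p e C t f = f) :=
  stmt5_general p e n hn K hK A hA i
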